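/- Let A, Σ be complex block matrices of the same 2×2 block shape, with A = L·U where L = fromBlocks L₁₁ 0 L₂₁ L₂₂ is block lower triangular and U = fromBlocks U₁₁ U₁₂ 0 U₂₂ is block upper triangular, and suppose A, L, U, U₂₂ are invertible. Define G^< = A⁻¹ · Σ · (A⁻¹)†. Then the bottom-right block of G^< equals U₂₂⁻¹ · W₂₂ · (U₂₂⁻¹)†, where W₂₂ is the bottom-right block of L⁻¹ · Σ · (L⁻¹)†. (Eq. (2): [G^<]_{nn} = (U_{nn})⁻¹ (L⁻¹ Σ L⁻†)_{nn} (U_{nn})⁻†.) -/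
import Mathlib

open Matrix

/-- Eq. (2): `[G^<]_{nn} = (U_{nn})⁻¹ (L⁻¹ Σ L⁻†)_{nn} (U_{nn})⁻†`, where `G^< = A⁻¹ Σ (A⁻¹)†`
and `A = L U` is a block LU factorization. -/
theorem gless_last_block {m n : Type*} [Fintype m] [Fintype n]
    [DecidableEq m] [DecidableEq n]
    (A Sig : Matrix (m ⊕ n) (m ⊕ n) ℂ)
    (L₁₁ : Matrix m m ℂ) (L₂₁ : Matrix n m ℂ) (L₂₂ : Matrix n n ℂ)
    (U₁₁ : Matrix m m ℂ) (U₁₂ : Matrix m n ℂ) (U₂₂ : Matrix n n ℂ)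
    (hLU : A = Matrix.fromBlocks L₁₁ 0 L₂₁ L₂₂ * Matrix.fromBlocks U₁₁ U₁₂ 0 U₂₂)
    (hA : IsUnit A) (hL : IsUnit (Matrix.fromBlocks L₁₁ 0 L₂₁ L₂₂ : Matrix (m ⊕ n) (m ⊕ n) ℂ))
    (hU : IsUnit (Matrix.fromBlocks U₁₁ U₁₂ 0 U₂₂ : Matrix (m ⊕ n) (m ⊕ n) ℂ))
    (hU22 : IsUnit U₂₂) :
    (A⁻¹ * Sig * (A⁻¹)ᴴ).toBlocks₂₂ =
      U₂₂⁻¹ *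
        ((Matrix.fromBlocks L₁₁ 0 L₂₁ L₂₂)⁻¹ * Sig *
          ((Matrix.fromBlocks L₁₁ 0 L₂₁ L₂₂)⁻¹)ᴴ).toBlocks₂₂ *
        (U₂₂⁻¹)ᴴ := by
  set L : Matrix (m ⊕ n) (m ⊕ n) ℂ := Matrix.fromBlocks L₁₁ 0 L₂₁ L₂₂ with hLdef
  set U : Matrix (m ⊕ n) (m ⊕ n) ℂ := Matrix.fromBlocks U₁₁ U₁₂ 0 U₂₂ with hUdef
  have hAinv : A⁻¹ = U⁻¹ * L⁻¹ := by
    rw [hLU, Matrix.mul_inv_rev]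
  -- U₁₁ and U₂₂ invertible
  letI iU : Invertible U := hU.invertible
  obtain ⟨iU11, iU22⟩ := Matrix.invertibleOfFromBlocksZero₂₁Invertible U₁₁ U₁₂ U₂₂
  have hUinv : U⁻¹ = Matrix.fromBlocks U₁₁⁻¹ (-(U₁₁⁻¹ * U₁₂ * U₂₂⁻¹)) 0 U₂₂⁻¹ := by
    letI := iU11; letI := iU22
    rw [← Matrix.invOf_eq_nonsing_inv U]
    show ⅟(Matrix.fromBlocks U₁₁ U₁₂ 0 U₂₂) = _
    rw [Matrix.invOf_fromBlocks_zero₂₁_eq U₁₁ U₁₂ U₂₂,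
      Matrix.invOf_eq_nonsing_inv, Matrix.invOf_eq_nonsing_inv]
  set W : Matrix (m ⊕ n) (m ⊕ n) ℂ := L⁻¹ * Sig * (L⁻¹)ᴴ with hWdef
  have : A⁻¹ * Sig * (A⁻¹)ᴴ = U⁻¹ * W * (U⁻¹)ᴴ := by
    rw [hAinv, hWdef, Matrix.conjTranspose_mul]
    simp only [mul_assoc]
  rw [this, hUinv, ← Matrix.fromBlocks_toBlocks W]
  rw [Matrix.fromBlocks_conjTranspose]
  simp [Matrix.fromBlocks_multiply, Matrix.toBlocks_fromBlocks₂₂]
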